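/- arXiv:1803.03164 — 6 statements merged into one kernel-verified Lean document; each statement's English description precedes it below -/
import Mathlib

section
/- Let G = (V, E) be a finite undirected graph with vertices v_1,...,v_n (n ≥ 4). Define, for each edge (v_i, v_j) ∈ E with i < j, the two addresses a_{ij} = c_i + e_{ij} and b_{ij} = c_j + e_{ij}, where e_{ij} = i·n² + j·n. Then there exists an assignment c : {1,...,n} → {1,2,3} such that all the addresses {a_{ij}, b_{ij} : (v_i,v_j) ∈ E} are pairwise distinct if and only if G is 3-colourable (i.e., there is a colouring of the vertices with 3 colours such that adjacent vertices get distinct colours). -/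
lemma addr_key (n c1 c2 i1 j1 i2 j2 : ℕ) (hn : 4 ≤ n)
    (hc1 : 1 ≤ c1 ∧ c1 ≤ 3) (hc2 : 1 ≤ c2 ∧ c2 ≤ 3)
    (hp : 1 ≤ i1 ∧ i1 < j1 ∧ j1 ≤ n) (hq : 1 ≤ i2 ∧ i2 < j2 ∧ j2 ≤ n)
    (h : c1 + (i1 * n ^ 2 + j1 * n) = c2 + (i2 * n ^ 2 + j2 * n)) :
    c1 = c2 ∧ i1 = i2 ∧ j1 = j2 := by
  have e1 : i1 * n ^ 2 + j1 * n = (i1 * n + j1) * n := by ring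
  have e2 : i2 * n ^ 2 + j2 * n = (i2 * n + j2) * n := by ring
  rw [e1, e2] at h
  have hAB : i1 * n + j1 = i2 * n + j2 := by
    rcases Nat.le_total (i1 * n + j1) (i2 * n + j2) with hle | hle
    · obtain ⟨k, hk⟩ := Nat.exists_eq_add_of_le hle
      rcases Nat.eq_zero_or_pos k with rfl | hkpos
      · omega
      · exfalso
        have hkn : n ≤ k * n := Nat.le_mul_of_pos_left n hkpos
        have h' : c1 + (i1 * n + j1) * n
            = c2 + ((i1 * n + j1) * n + k * n) := by
          rw [← add_mul, ← hk]; exact h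
        omega
    · obtain ⟨k, hk⟩ := Nat.exists_eq_add_of_le hle
      rcases Nat.eq_zero_or_pos k with rfl | hkpos
      · omega
      · exfalso
        have hkn : n ≤ k * n := Nat.le_mul_of_pos_left n hkpos
        have h' : c1 + ((i2 * n + j2) * n + k * n)
            = c2 + (i2 * n + j2) * n := by
          rw [← add_mul, ← hk]; exact h
        omega
  have hij : i1 = i2 ∧ j1 = j2 := by
    rcases Nat.le_total i1 i2 with hle | hle
    · obtain ⟨k, hk⟩ := Nat.exists_eq_add_of_le hle
      rcases Nat.eq_zero_or_pos k with rfl | hkpos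
      · constructor
        · omega
        · rw [Nat.add_zero] at hk; subst hk; omega
      · exfalso
        have hkn : n ≤ k * n := Nat.le_mul_of_pos_left n hkpos
        rw [hk, add_mul] at hAB
        omega
    · obtain ⟨k, hk⟩ := Nat.exists_eq_add_of_le hle
      rcases Nat.eq_zero_or_pos k with rfl | hkpos
      · constructor
        · omega
        · rw [Nat.add_zero] at hk; subst hk; omega
      · exfalso
        have hkn : n ≤ k * n := Nat.le_mul_of_pos_left n hkpos
        rw [hk, add_mul] at hAB
        omega
  obtain ⟨hi, hj⟩ := hij
  subst hi; subst hj
  exact ⟨by omega, rfl, rfl⟩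

/-- The cells of `A_G` (two cells `c_i + e_{ij}`, `c_j + e_{ij}` per edge,
where `e_{ij} = i·n² + j·n`) can be made pairwise distinct by some
choice of colours `c : {1,…,n} → {1,2,3}` iff `G` is 3-colourable. -/
theorem threeColourability_iff_distinct_cells (n : ℕ) (hn : 4 ≤ n)
    (E : Finset (ℕ × ℕ)) (hE : ∀ p ∈ E, 1 ≤ p.1 ∧ p.1 < p.2 ∧ p.2 ≤ n) :
    (∃ c : ℕ → ℕ, (∀ i, 1 ≤ c i ∧ c i ≤ 3) ∧
      Function.Injective (fun pb : {p // p ∈ E} × Bool =>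
        if pb.2 then c pb.1.1.1 + (pb.1.1.1 * n ^ 2 + pb.1.1.2 * n)
        else c pb.1.1.2 + (pb.1.1.1 * n ^ 2 + pb.1.1.2 * n))) ↔
    (∃ c : ℕ → ℕ, (∀ i, 1 ≤ c i ∧ c i ≤ 3) ∧ ∀ p ∈ E, c p.1 ≠ c p.2) := by
  constructor
  · rintro ⟨c, hc, hinj⟩
    refine ⟨c, hc, fun p hp hcp => ?_⟩
    have := hinj (a₁ := (⟨p, hp⟩, true)) (a₂ := (⟨p, hp⟩, false)) (by simp [hcp])
    simp at this
  · rintro ⟨c, hc, hcol⟩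
    refine ⟨c, hc, ?_⟩
    rintro ⟨⟨p, hp⟩, b⟩ ⟨⟨q, hq⟩, b'⟩ h
    simp only at h
    have hp' := hE p hp
    have hq' := hE q hq
    cases b <;> cases b' <;>
      simp only [if_true, if_false, Bool.false_eq_true] at h
    · obtain ⟨h1, h2, h3⟩ := addr_key n (c p.2) (c q.2) p.1 p.2 q.1 q.2 hn
        (hc p.2) (hc q.2) hp' hq' h
      have : p = q := Prod.ext h2 h3
      subst this; rfl
    · obtain ⟨h1, h2, h3⟩ := addr_key n (c p.2) (c q.1) p.1 p.2 q.1 q.2 hn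
        (hc p.2) (hc q.1) hp' hq' h
      exfalso
      have : p = q := Prod.ext h2 h3
      subst this
      exact hcol p hp h1.symm
    · obtain ⟨h1, h2, h3⟩ := addr_key n (c p.1) (c q.2) p.1 p.2 q.1 q.2 hn
        (hc p.1) (hc q.2) hp' hq' h
      exfalso
      have : p = q := Prod.ext h2 h3
      subst this
      exact hcol p hp h1
    · obtain ⟨h1, h2, h3⟩ := addr_key n (c p.1) (c q.1) p.1 p.2 q.1 q.2 hn
        (hc p.1) (hc q.1) hp' hq' h
      have : p = q := Prod.ext h2 h3
      subst this; rfl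
end

section
/- Satisfiability of a quantifier-free symbolic heap A = (Π_A : *_{i=1}^ℓ t_i ↦ t'_i) in SL pointer arithmetic is equivalent to satisfiability of the Presburger formula γ_A = Π_A ∧ ⋀_{1 ≤ i < j ≤ ℓ} (t_i ≤ t_j − 1 ∨ t_j ≤ t_i − 1): every stack-heap model (s,h) of A yields a valuation satisfying γ_A, and conversely every valuation satisfying γ_A yields a heap h such that (s,h) ⊨ A. -/
/-- Terms of SL pointer arithmetic: variables, constant offsets and sums. -/
inductive SLTerm (V : Type) : Type
  | var : V → SLTerm V
  | addConst : SLTerm V → ℕ → SLTerm V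
  | add : SLTerm V → SLTerm V → SLTerm V

/-- Evaluation of a term under a stack. -/
def SLTerm.eval {V : Type} (s : V → ℕ) : SLTerm V → ℕ
  | .var v => s v
  | .addConst t k => t.eval s + k
  | .add t u => t.eval s + u.eval s

/-- Heaps: partial functions from locations to values. -/
abbrev Heap := ℕ → Option ℕ

def Heap.emp : Heap := fun _ => none

def Heap.disjoint (h₁ h₂ : Heap) : Prop := ∀ a, h₁ a = none ∨ h₂ a = none

def Heap.union (h₁ h₂ : Heap) : Heap := fun a => (h₁ a).orElse (fun _ => h₂ a)

/-- Spatial formulas: `emp`, points-to, and separating conjunction. -/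
inductive SpForm (V : Type) : Type
  | emp : SpForm V
  | pts : SLTerm V → SLTerm V → SpForm V
  | star : SpForm V → SpForm V → SpForm V

/-- Satisfaction of spatial formulas. -/
def SpForm.sat {V : Type} (s : V → ℕ) : Heap → SpForm V → Prop
  | h, .emp => h = Heap.emp
  | h, .pts t t' => ∀ a, h a = if a = t.eval s then some (t'.eval s) else none
  | h, .star F₁ F₂ => ∃ h₁ h₂, Heap.disjoint h₁ h₂ ∧ h = Heap.union h₁ h₂ ∧
      SpForm.sat s h₁ F₁ ∧ SpForm.sat s h₂ F₂

/-- Iterated separating conjunction of a list of points-to assertions. -/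
def starList {V : Type} : List (SLTerm V × SLTerm V) → SpForm V
  | [] => .emp
  | p :: ps => .star (.pts p.1 p.2) (starList ps)

/-!
By induction on the list, a model of `*_i t_i ↦ t'_i` is allocated exactly at the addresses
`s(t_i)`. Hence disjointness of the two pieces split off at each `*` says precisely that the head
address differs from all later ones; conversely, when the addresses are pairwise distinct the
one-cell heaps `s(t_i) ↦ s(t'_i)` are pairwise disjoint and their union is a model.
-/

namespace Heap

def singleton (a v : ℕ) : Heap := fun x => if x = a then some v else none

theorem singleton_eq_none_iff {a v x : ℕ} : singleton a v x = none ↔ x ≠ a := by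
  simp [singleton]

theorem union_eq_none_iff {h₁ h₂ : Heap} {a : ℕ} :
    union h₁ h₂ a = none ↔ h₁ a = none ∧ h₂ a = none := by
  cases h : h₁ a <;> simp [union, Option.orElse, h]

end Heap

section

variable {V : Type} {s : V → ℕ}

theorem SpForm.sat_pts_iff {h : Heap} {t t' : SLTerm V} :
    SpForm.sat s h (.pts t t') ↔ h = Heap.singleton (t.eval s) (t'.eval s) := by
  rw [SpForm.sat, funext_iff]
  rfl

theorem eq_none_iff_of_sat_starList {L : List (SLTerm V × SLTerm V)} {h : Heap}
    (hsat : SpForm.sat s h (starList L)) (a : ℕ) :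
    h a = none ↔ ∀ p ∈ L, p.1.eval s ≠ a := by
  induction L generalizing h with
  | nil => simp [show h = Heap.emp from hsat, Heap.emp]
  | cons q L ih =>
    obtain ⟨h₁, h₂, -, rfl, hq, hL⟩ := hsat
    rw [SpForm.sat_pts_iff.1 hq, Heap.union_eq_none_iff, Heap.singleton_eq_none_iff, ih hL,
      List.forall_mem_cons, ne_comm]

theorem pairwise_of_sat_starList {L : List (SLTerm V × SLTerm V)} {h : Heap}
    (hsat : SpForm.sat s h (starList L)) :
    L.Pairwise (fun p q => p.1.eval s ≠ q.1.eval s) := by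
  induction L generalizing h with
  | nil => exact .nil
  | cons q L ih =>
    obtain ⟨h₁, h₂, hdisj, -, hq, hL⟩ := hsat
    have hq_alloc : h₁ (q.1.eval s) ≠ none := by
      simp [SpForm.sat_pts_iff.1 hq, Heap.singleton_eq_none_iff]
    have hL_free : h₂ (q.1.eval s) = none := (hdisj _).resolve_left hq_alloc
    exact .cons (fun p hp => ((eq_none_iff_of_sat_starList hL _).1 hL_free p hp).symm) (ih hL)

theorem exists_sat_starList_of_pairwise {L : List (SLTerm V × SLTerm V)}
    (hL : L.Pairwise (fun p q => p.1.eval s ≠ q.1.eval s)) :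
    ∃ h : Heap, SpForm.sat s h (starList L) := by
  induction L with
  | nil => exact ⟨Heap.emp, rfl⟩
  | cons q L ih =>
    obtain ⟨hq_fresh, hL⟩ := List.pairwise_cons.1 hL
    obtain ⟨h₂, hsat⟩ := ih hL
    refine ⟨Heap.union (Heap.singleton (q.1.eval s) (q.2.eval s)) h₂,
      _, h₂, fun a => ?_, rfl, SpForm.sat_pts_iff.2 rfl, hsat⟩
    by_cases ha : a = q.1.eval s
    · exact .inr ((eq_none_iff_of_sat_starList hsat a).2 fun p hp => ha ▸ (hq_fresh p hp).symm)
    · exact .inl (Heap.singleton_eq_none_iff.2 ha)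

end

/-- Satisfiability of a symbolic heap `Π_A : *_i t_i ↦ t'_i` is equivalent
to satisfiability of `γ_A = Π_A ∧ pairwise-distinctness of the t_i`:
every stack-heap model of `A` yields a valuation satisfying `γ_A`
(the same stack works), and conversely every stack satisfying `γ_A`
yields a heap modelling `A`. -/
theorem satisfiability_iff_gamma {V : Type}
    (PureA : (V → ℕ) → Prop) (L : List (SLTerm V × SLTerm V)) :
    (∀ (s : V → ℕ) (h : Heap), PureA s → SpForm.sat s h (starList L) →
        (PureA s ∧ L.Pairwise (fun p q => p.1.eval s ≠ q.1.eval s))) ∧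
    (∀ s : V → ℕ, PureA s → L.Pairwise (fun p q => p.1.eval s ≠ q.1.eval s) →
        ∃ h : Heap, SpForm.sat s h (starList L)) :=
  ⟨fun _ _ hpure hsat => ⟨hpure, pairwise_of_sat_starList hsat⟩,
    fun _ _ hL => exists_sat_starList_of_pairwise hL⟩
end

section
/- Small model property for conjunctions of difference constraints: let Γ be a finite conjunction of constraints of the forms x' ≤ x + k, x' < x + k, x' = x + k (variables x, x' among x_1,...,x_n, integer constants k). If Γ has a solution over the natural numbers, then Γ has a solution in which every variable takes a value at most M = Σ_i (|k_i| + 1), where the sum ranges over all constant occurrences k_i in Γ. -/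
/-!
Take a solution `s` of minimal total weight `∑ i, s i` and suppose some value exceeds `M`.
Lowering by one every value that is at least a threshold `t ≥ 1` can only break a constraint
`x_i ⋈ x_j + k` when `t` lies in an integer window of `|k| + 1` points next to `s j`.
The windows of all constraints cover at most `M` thresholds, while `1, …, max s` offers more than
`M`, so some threshold breaks nothing and yields a lighter solution.
-/

/-- Kinds of difference constraints: `x' ≤ x + k`, `x' < x + k`, `x' = x + k`. -/
inductive DCKind : Type
  | le | lt | eq

/-- A difference constraint between variables `i, j` (meaning
`x_i ≤/</= x_j + k`). -/
structure DiffConstr (n : ℕ) : Type where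
  kind : DCKind
  i : Fin n
  j : Fin n
  k : ℤ

/-- Satisfaction of a difference constraint by a valuation into ℕ. -/
def DiffConstr.holds {n : ℕ} (s : Fin n → ℕ) (c : DiffConstr n) : Prop :=
  match c.kind with
  | .le => (s c.i : ℤ) ≤ (s c.j : ℤ) + c.k
  | .lt => (s c.i : ℤ) < (s c.j : ℤ) + c.k
  | .eq => (s c.i : ℤ) = (s c.j : ℤ) + c.k

def lowerAbove {n : ℕ} (t : ℤ) (s : Fin n → ℕ) : Fin n → ℕ :=
  fun i => if t ≤ s i then s i - 1 else s i

lemma lowerAbove_le {n : ℕ} (t : ℤ) (s : Fin n → ℕ) (i : Fin n) : lowerAbove t s i ≤ s i := by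
  unfold lowerAbove; split <;> omega

lemma lowerAbove_lt {n : ℕ} {t : ℤ} (ht : 1 ≤ t) {s : Fin n → ℕ} {i : Fin n} (hi : t ≤ s i) :
    lowerAbove t s i < s i := by
  unfold lowerAbove; rw [if_pos hi]; omega

namespace DiffConstr

variable {n : ℕ}

/-- Contains every threshold `t ≥ 1` at which `lowerAbove t` breaks `c`. -/
noncomputable def window (s : Fin n → ℕ) (c : DiffConstr n) : Finset ℤ :=
  Finset.Ioc (s c.j + min c.k 0 - 1) (s c.j + max c.k 0)

lemma card_window (s : Fin n → ℕ) (c : DiffConstr n) : (c.window s).card = c.k.natAbs + 1 := by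
  rw [window, Int.card_Ioc]; omega

lemma holds_lowerAbove {s : Fin n → ℕ} {c : DiffConstr n} (h : c.holds s) {t : ℤ} (ht : 1 ≤ t)
    (hw : t ∉ c.window s) : c.holds (lowerAbove t s) := by
  rcases c with ⟨kind, i, j, k⟩
  simp only [window, Finset.mem_Ioc, not_and_or, not_lt, not_le] at hw
  cases kind <;> simp only [holds, lowerAbove] at h ⊢ <;> split_ifs <;> omega

end DiffConstr

lemma List.exists_mem_forall_notMem_of_sum_lt_card {α β : Type*} [DecidableEq β]
    (l : List α) (w : α → Finset β) (b : α → ℕ) (hw : ∀ a ∈ l, (w a).card ≤ b a)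
    (S : Finset β) (hS : (l.map b).sum < S.card) : ∃ t ∈ S, ∀ a ∈ l, t ∉ w a := by
  induction l generalizing S with
  | nil =>
    obtain ⟨t, ht⟩ := Finset.card_pos.mp (by simpa using hS)
    exact ⟨t, ht, by simp⟩
  | cons a l ih =>
    simp only [List.map_cons, List.sum_cons] at hS
    have hwa := hw a List.mem_cons_self
    obtain ⟨t, htS, htl⟩ := ih (fun a' ha' => hw a' (List.mem_cons_of_mem a ha')) (S \ w a)
      (by have := Finset.le_card_sdiff (w a) S; omega)
    rw [Finset.mem_sdiff] at htS
    exact ⟨t, htS.1, List.forall_mem_cons.mpr ⟨htS.2, htl⟩⟩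

lemma exists_solution_sum_lt {n : ℕ} {Γ : List (DiffConstr n)} {s : Fin n → ℕ}
    (hs : ∀ c ∈ Γ, c.holds s) {i₀ : Fin n}
    (hi₀ : (Γ.map (fun c => c.k.natAbs + 1)).sum < s i₀) :
    ∃ s' : Fin n → ℕ, (∀ c ∈ Γ, c.holds s') ∧ ∑ i, s' i < ∑ i, s i := by
  obtain ⟨t, ht, htΓ⟩ := Γ.exists_mem_forall_notMem_of_sum_lt_card (·.window s)
    (fun c => c.k.natAbs + 1) (fun c _ => (c.card_window s).le) (Finset.Icc (1 : ℤ) (s i₀))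
    (by rw [Int.card_Icc]; omega)
  rw [Finset.mem_Icc] at ht
  refine ⟨lowerAbove t s, fun c hc => DiffConstr.holds_lowerAbove (hs c hc) ht.1 (htΓ c hc), ?_⟩
  exact Finset.sum_lt_sum (fun i _ => lowerAbove_le t s i)
    ⟨i₀, Finset.mem_univ _, lowerAbove_lt ht.1 ht.2⟩

/-- Small model property for conjunctions of difference constraints:
if the system has a solution over ℕ, then it has a solution in which
every variable is bounded by `M = Σ (|k_i| + 1)`. -/
theorem diff_constraints_small_model {n : ℕ} (Γ : List (DiffConstr n))
    (hsat : ∃ s : Fin n → ℕ, ∀ c ∈ Γ, c.holds s) :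
    ∃ s : Fin n → ℕ, (∀ c ∈ Γ, c.holds s) ∧
      ∀ i, s i ≤ (Γ.map (fun c => c.k.natAbs + 1)).sum := by
  obtain ⟨s, hs⟩ := hsat
  induction hN : ∑ i, s i using Nat.strong_induction_on generalizing s with
  | _ N ih =>
    by_cases hsmall : ∀ i, s i ≤ (Γ.map (fun c => c.k.natAbs + 1)).sum
    · exact ⟨s, hs, hsmall⟩
    push Not at hsmall
    obtain ⟨i₀, hi₀⟩ := hsmall
    obtain ⟨s', hs', hlt⟩ := exists_solution_sum_lt hs hi₀
    exact ih _ (hN ▸ hlt) s' hs' rfl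
end

section
/- Let G = (V, E) be a graph on vertices v_1,...,v_n with leaves v_1,...,v_k, n ≥ 4. The quantified entailment A''_G ⊨ B''_G (as defined via the 2-round 3-colourability encoding) is valid if and only if every 3-colouring of the leaves v_1,...,v_k extends to a proper 3-colouring of all of G. Abstractly: for all functions f : {1,...,k} → {1,2,3}, there exists g : {1,...,n} → {1,2,3} extending f such that g(i) ≠ g(j) for every edge (v_i, v_j) ∈ E, if and only if for every assignment of the leaf colours c_1,...,c_k ∈ {c_0+1,...,c_0+3} and heap h consisting of the cells c_0 + e_{ij} + ℓ (ℓ = 1,2,3, (v_i,v_j) ∈ E), there exist colours c_{k+1},...,c_n and complementary colours c̃_{ij}, all in [c_0+1, c_0+3], such that for each edge (v_i,v_j) ∈ E the triple (c_i + e_{ij}, c_j + e_{ij}, c̃_{ij} + e_{ij}) enumerates exactly the three cells {c_0 + e_{ij} + 1, c_0 + e_{ij} + 2, c_0 + e_{ij} + 3}. -/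
/-- Correctness of the 2-round 3-colourability encoding: every
3-colouring of the leaves `1,…,k` extends to a proper 3-colouring of
`G` if and only if for every assignment of leaf colours in
`[c_0+1, c_0+3]` there are colours for the remaining vertices and
complementary edge colours, all in `[c_0+1, c_0+3]`, such that for each
edge `(i,j)` the triple of addresses
`(c_i + e_{ij}, c_j + e_{ij}, c̃_{ij} + e_{ij})` enumerates exactly the
three cells `c_0 + e_{ij} + 1, c_0 + e_{ij} + 2, c_0 + e_{ij} + 3`
(where `e_{ij} = i·n² + j·n`). -/
theorem two_round_three_colourability_encoding (n k : ℕ) (hn : 4 ≤ n) (hk : k ≤ n)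
    (E : Finset (ℕ × ℕ)) (hE : ∀ p ∈ E, 1 ≤ p.1 ∧ p.1 < p.2 ∧ p.2 ≤ n)
    (c0 : ℕ) :
    (∀ f : ℕ → ℕ, (∀ i, 1 ≤ i → i ≤ k → 1 ≤ f i ∧ f i ≤ 3) →
      ∃ g : ℕ → ℕ, (∀ i, 1 ≤ i → i ≤ k → g i = f i) ∧
        (∀ i, 1 ≤ i → i ≤ n → 1 ≤ g i ∧ g i ≤ 3) ∧
        (∀ p ∈ E, g p.1 ≠ g p.2)) ↔
    (∀ c : ℕ → ℕ, (∀ i, 1 ≤ i → i ≤ k → c0 + 1 ≤ c i ∧ c i ≤ c0 + 3) →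
      ∃ (c' : ℕ → ℕ) (ct : ℕ × ℕ → ℕ),
        (∀ i, 1 ≤ i → i ≤ k → c' i = c i) ∧
        (∀ i, 1 ≤ i → i ≤ n → c0 + 1 ≤ c' i ∧ c' i ≤ c0 + 3) ∧
        (∀ p ∈ E, c0 + 1 ≤ ct p ∧ ct p ≤ c0 + 3) ∧
        (∀ p ∈ E,
          ({c' p.1 + (p.1 * n ^ 2 + p.2 * n),
            c' p.2 + (p.1 * n ^ 2 + p.2 * n),
            ct p + (p.1 * n ^ 2 + p.2 * n)} : Finset ℕ) =
          {c0 + (p.1 * n ^ 2 + p.2 * n) + 1,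
           c0 + (p.1 * n ^ 2 + p.2 * n) + 2,
           c0 + (p.1 * n ^ 2 + p.2 * n) + 3})) := by
  constructor
  · intro H c hc
    obtain ⟨g, hgf, hgb, hgE⟩ := H (fun i => c i - c0) (by
      intro i h1 h2; have := hc i h1 h2; omega)
    refine ⟨fun i => c0 + g i, fun p => c0 + (6 - g p.1 - g p.2), ?_, ?_, ?_, ?_⟩
    · intro i h1 h2
      have h3 := hc i h1 h2
      have h4 := hgf i h1 h2
      dsimp only at h4 ⊢
      omega
    · intro i h1 h2; have := hgb i h1 h2; dsimp only; omega
    · intro p hp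
      have h := hE p hp
      have h1 := hgb p.1 h.1 (by omega)
      have h2 := hgb p.2 (by omega) h.2.2
      have hne := hgE p hp
      dsimp only
      omega
    · intro p hp
      have h := hE p hp
      have h1 := hgb p.1 h.1 (by omega)
      have h2 := hgb p.2 (by omega) h.2.2
      have hne := hgE p hp
      ext m
      simp only [Finset.mem_insert, Finset.mem_singleton]
      omega
  · intro H f hf
    obtain ⟨c', ct, hcf, hcb, hctb, hset⟩ := H (fun i => c0 + f i) (by
      intro i h1 h2; have := hf i h1 h2; omega)
    refine ⟨fun i => c' i - c0, ?_, ?_, ?_⟩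
    · intro i h1 h2
      have h3 := hcf i h1 h2
      have h4 := hf i h1 h2
      dsimp only at h3 ⊢
      omega
    · intro i h1 h2; have := hcb i h1 h2; dsimp only; omega
    · intro p hp
      have h := hE p hp
      have h1 := hcb p.1 h.1 (by omega)
      have h2 := hcb p.2 (by omega) h.2.2
      have hs := hset p hp
      dsimp only
      intro heq
      have heq' : c' p.1 = c' p.2 := by omega
      have hcard : ({c0 + (p.1 * n ^ 2 + p.2 * n) + 1,
           c0 + (p.1 * n ^ 2 + p.2 * n) + 2,
           c0 + (p.1 * n ^ 2 + p.2 * n) + 3} : Finset ℕ).card = 3 := by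
        rw [Finset.card_insert_of_notMem (by
              simp only [Finset.mem_insert, Finset.mem_singleton]; omega),
            Finset.card_insert_of_notMem (by
              simp only [Finset.mem_singleton]; omega)]
        simp
      rw [← hs, heq', Finset.insert_idem] at hcard
      have hle := Finset.card_insert_le (c' p.2 + (p.1 * n ^ 2 + p.2 * n))
        ({ct p + (p.1 * n ^ 2 + p.2 * n)} : Finset ℕ)
      simp only [Finset.card_singleton] at hle
      omega
end

section
/- Let G be a graph on vertices {1,...,n} with n ≥ 4. Consider the symbolic heaps A'_G (pure part: ⋀_{i=1}^n c_0+1 ≤ c_i ≤ b; spatial part: the pairwise-distinct cells c_i + e_{ij}, c_j + e_{ij} over edges) and B'_G (same, but with additional pure conjunct b ≥ c_0 + 4). Then the entailment A'_G ⊨ B'_G fails if and only if G has a proper 3-colouring. Abstractly: there exists an assignment of b and c_1,...,c_n with c_0+1 ≤ c_i ≤ b for all i such that all cells c_i + e_{ij}, c_j + e_{ij} over edges (i,j) ∈ E are pairwise distinct and b ≤ c_0 + 3, if and only if G is 3-colourable. -/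
/-- The entailment `A'_G ⊨ B'_G` fails iff `G` is 3-colourable:
there is an assignment of `b` and colours `c_1,…,c_n` in `[c_0+1, b]`
with `b ≤ c_0 + 3` making all the cells `c_i + e_{ij}`, `c_j + e_{ij}`
(over edges `(i,j)`, with `e_{ij} = i·n² + j·n`) pairwise distinct,
iff `G` has a proper 3-colouring. -/
theorem entailment_failure_iff_three_colourable (n : ℕ) (hn : 4 ≤ n)
    (E : Finset (ℕ × ℕ)) (hE : ∀ p ∈ E, 1 ≤ p.1 ∧ p.1 < p.2 ∧ p.2 ≤ n)
    (c0 : ℕ) :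
    (∃ (b : ℕ) (c : ℕ → ℕ),
      (∀ i, 1 ≤ i → i ≤ n → c0 + 1 ≤ c i ∧ c i ≤ b) ∧
      b ≤ c0 + 3 ∧
      Function.Injective (fun pb : {p // p ∈ E} × Bool =>
        if pb.2 then c pb.1.1.1 + (pb.1.1.1 * n ^ 2 + pb.1.1.2 * n)
        else c pb.1.1.2 + (pb.1.1.1 * n ^ 2 + pb.1.1.2 * n))) ↔
    (∃ g : ℕ → ℕ, (∀ i, 1 ≤ g i ∧ g i ≤ 3) ∧ ∀ p ∈ E, g p.1 ≠ g p.2) := by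
  constructor
  · rintro ⟨b, c, hc, hb, hinj⟩
    refine ⟨fun i => if 1 ≤ i ∧ i ≤ n then c i - c0 else 1, ?_, ?_⟩
    · intro i
      dsimp only
      by_cases h : 1 ≤ i ∧ i ≤ n
      · have := hc i h.1 h.2
        rw [if_pos h]
        omega
      · rw [if_neg h]
        omega
    · intro p hp hgg
      obtain ⟨h1, h2, h3⟩ := hE p hp
      have hb1 := hc p.1 h1 (by omega)
      have hb2 := hc p.2 (by omega) h3
      dsimp only at hgg
      rw [if_pos (show 1 ≤ p.1 ∧ p.1 ≤ n by omega),
        if_pos (show 1 ≤ p.2 ∧ p.2 ≤ n by omega)] at hgg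
      have hcc : c p.1 = c p.2 := by omega
      have := hinj (a₁ := (⟨p, hp⟩, true)) (a₂ := (⟨p, hp⟩, false))
        (by simp [hcc])
      simp at this
  · rintro ⟨g, hg, hgE⟩
    refine ⟨c0 + 3, fun i => c0 + g i, ?_, le_refl _, ?_⟩
    · intro i _ _
      have := hg i
      dsimp only
      omega
    · have lem : ∀ a b a' b' : ℕ, a < a' → b ≤ n → 1 ≤ b' →
          a * n + b ≠ a' * n + b' := by
        intro a b a' b' h hbn hb' heq
        have h2 : a * n + n ≤ a' * n := by
          calc a * n + n = (a + 1) * n := by ring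
          _ ≤ a' * n := Nat.mul_le_mul_right n h
        omega
      rintro ⟨⟨p, hp⟩, bp⟩ ⟨⟨q, hq⟩, bq⟩ h
      simp only at h
      obtain ⟨hp1, hp2, hp3⟩ := hE p hp
      obtain ⟨hq1, hq2, hq3⟩ := hE q hq
      by_cases hpq : p = q
      · subst hpq
        have hne := hgE p hp
        cases bp <;> cases bq
        · rfl
        · exfalso; simp only [Bool.false_eq_true, if_false, if_true] at h; omega
        · exfalso; simp only [Bool.false_eq_true, if_false, if_true] at h; omega
        · rfl
      · exfalso
        -- the offsets of distinct edges differ by at least n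
        have hA : p.1 * n ^ 2 + p.2 * n = n * (p.1 * n + p.2) := by ring
        have hB : q.1 * n ^ 2 + q.2 * n = n * (q.1 * n + q.2) := by ring
        have hAB : p.1 * n + p.2 ≠ q.1 * n + q.2 := by
          rcases Nat.lt_trichotomy p.1 q.1 with h' | h' | h'
          · exact lem _ _ _ _ h' (by omega) (by omega)
          · intro heq
            rw [h'] at heq
            exact hpq (Prod.ext h' (by omega))
          · exact fun heq => lem _ _ _ _ h' (by omega) (by omega) heq.symm
        have hgap : n * (p.1 * n + p.2) + n ≤ n * (q.1 * n + q.2) ∨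
            n * (q.1 * n + q.2) + n ≤ n * (p.1 * n + p.2) := by
          rcases Nat.lt_or_gt_of_ne hAB with h' | h'
          · left
            calc n * (p.1 * n + p.2) + n = n * (p.1 * n + p.2 + 1) := by ring
            _ ≤ n * (q.1 * n + q.2) := Nat.mul_le_mul_left n h'
          · right
            calc n * (q.1 * n + q.2) + n = n * (q.1 * n + q.2 + 1) := by ring
            _ ≤ n * (p.1 * n + p.2) := Nat.mul_le_mul_left n h'
        rw [hA, hB] at h
        have g1 := hg p.1; have g2 := hg p.2
        have g3 := hg q.1; have g4 := hg q.2
        cases bp <;> cases bq <;>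
          simp only [Bool.false_eq_true, if_false, if_true] at h <;> omega
end

section
/- Model characterization of entailment: for quantifier-free symbolic heaps A = (Π_A : *_{i=1}^ℓ t_i ↦ t'_i) and B = (∃ȳ. Π_B : *_{j=1}^{ℓ'} u_j ↦ u'_j), the entailment A ⊨ B is valid if and only if the Presburger sentence ∀x̄ (γ_A(x̄) → ∃ȳ (γ_B(x̄,ȳ) ∧ iso(x̄,ȳ))) holds, where iso(x̄,ȳ) = ⋀_i ⋁_j (t_i = u_j ∧ t'_i = u'_j) ∧ ⋀_j ⋁_i (u_j = t_i ∧ u'_j = t'_i), and γ_A, γ_B augment Π_A, Π_B with pairwise-distinctness of the allocated addresses. -/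
def listHeap {V : Type} (s : V → ℕ) : List (SLTerm V × SLTerm V) → Heap
  | [] => Heap.emp
  | p :: ps => fun a => if a = p.1.eval s then some (p.2.eval s) else listHeap s ps a

theorem listHeap_none {V : Type} (s : V → ℕ) (L : List (SLTerm V × SLTerm V)) (a : ℕ) :
    listHeap s L a = none ↔ ∀ p ∈ L, a ≠ p.1.eval s := by
  induction L with
  | nil => simp [listHeap, Heap.emp]
  | cons p ps ih =>
    simp only [listHeap, List.mem_cons]
    by_cases hc : a = p.1.eval s
    · simp [hc]
    · simp only [if_neg hc, ih]
      constructor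
      · rintro H q (rfl | hq)
        · exact hc
        · exact H q hq
      · intro H q hq; exact H q (Or.inr hq)

theorem listHeap_mem {V : Type} (s : V → ℕ) {L : List (SLTerm V × SLTerm V)}
    (hp : L.Pairwise fun p q => p.1.eval s ≠ q.1.eval s)
    {p} (hm : p ∈ L) : listHeap s L (p.1.eval s) = some (p.2.eval s) := by
  induction L with
  | nil => cases hm
  | cons q qs ih =>
    rcases List.mem_cons.mp hm with rfl | hm'
    · simp [listHeap]
    · have hne : p.1.eval s ≠ q.1.eval s :=
        fun h => (List.pairwise_cons.mp hp).1 p hm' h.symm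
      simp [listHeap, if_neg hne, ih (List.pairwise_cons.mp hp).2 hm']

theorem listHeap_some {V : Type} (s : V → ℕ) {L : List (SLTerm V × SLTerm V)} {a v : ℕ}
    (h : listHeap s L a = some v) : ∃ p ∈ L, a = p.1.eval s ∧ v = p.2.eval s := by
  induction L with
  | nil => simp [listHeap, Heap.emp] at h
  | cons q qs ih =>
    simp only [listHeap] at h
    by_cases hc : a = q.1.eval s
    · rw [if_pos hc] at h
      exact ⟨q, List.mem_cons_self .., hc, (Option.some_injective _ h).symm⟩
    · rw [if_neg hc] at h
      obtain ⟨p, hp, h1, h2⟩ := ih h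
      exact ⟨p, List.mem_cons_of_mem _ hp, h1, h2⟩

theorem sat_starList_iff {V : Type} (s : V → ℕ) (L : List (SLTerm V × SLTerm V)) (h : Heap) :
    SpForm.sat s h (starList L) ↔
      (L.Pairwise fun p q => p.1.eval s ≠ q.1.eval s) ∧ h = listHeap s L := by
  induction L generalizing h with
  | nil => simp [starList, SpForm.sat, listHeap]
  | cons p ps ih =>
    simp only [starList, SpForm.sat, ih, List.pairwise_cons]
    constructor
    · rintro ⟨h₁, h₂, hdisj, rfl, hsat1, hps, rfl⟩
      have h1eq : ∀ a, h₁ a = if a = p.1.eval s then some (p.2.eval s) else none := hsat1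
      have hnone : listHeap s ps (p.1.eval s) = none := by
        rcases hdisj (p.1.eval s) with h | h
        · rw [h1eq] at h; simp at h
        · exact h
      have hforall := (listHeap_none s ps (p.1.eval s)).mp hnone
      refine ⟨⟨fun q hq => fun he => hforall q hq he, hps⟩, ?_⟩
      funext a
      simp only [Heap.union, h1eq a, listHeap]
      by_cases hc : a = p.1.eval s <;> simp [hc, Option.orElse]
    · rintro ⟨⟨hhead, hps⟩, rfl⟩
      refine ⟨fun a => if a = p.1.eval s then some (p.2.eval s) else none,
        listHeap s ps, ?_, ?_, fun a => rfl, hps, rfl⟩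
      · intro a
        by_cases hc : a = p.1.eval s
        · right
          rw [listHeap_none]
          intro q hq he
          exact hhead q hq (hc ▸ he)
        · left; simp [hc]
      · funext a
        simp only [Heap.union, listHeap]
        by_cases hc : a = p.1.eval s <;> simp [hc, Option.orElse]

/-- Model characterization of entailment: for quantifier-free
`A = (Π_A : *_i t_i ↦ t'_i)` and `B = (∃ȳ. Π_B : *_j u_j ↦ u'_j)`
(the existential variables `ȳ` of `B` modelled by the summand `W`), the
entailment `A ⊨ B` is valid iff the Presburger sentence
`∀x̄ (γ_A(x̄) → ∃ȳ (γ_B(x̄,ȳ) ∧ iso(x̄,ȳ)))` holds, where `γ_A`, `γ_B`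
add pairwise-distinctness of allocated addresses and `iso` states that
the two cell-collections mutually include each other. -/
theorem entailment_iff_presburger {V W : Type}
    (PureA : (V → ℕ) → Prop) (LA : List (SLTerm V × SLTerm V))
    (PureB : ((V ⊕ W) → ℕ) → Prop) (LB : List (SLTerm (V ⊕ W) × SLTerm (V ⊕ W))) :
    (∀ (s : V → ℕ) (h : Heap),
        PureA s → SpForm.sat s h (starList LA) →
        ∃ s' : (V ⊕ W) → ℕ, (∀ x, s' (Sum.inl x) = s x) ∧
          PureB s' ∧ SpForm.sat s' h (starList LB)) ↔
    (∀ s : V → ℕ,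
        (PureA s ∧ LA.Pairwise fun p q => p.1.eval s ≠ q.1.eval s) →
        ∃ s' : (V ⊕ W) → ℕ, (∀ x, s' (Sum.inl x) = s x) ∧
          (PureB s' ∧ LB.Pairwise fun p q => p.1.eval s' ≠ q.1.eval s') ∧
          ((∀ p ∈ LA, ∃ q ∈ LB, p.1.eval s = q.1.eval s' ∧ p.2.eval s = q.2.eval s') ∧
           (∀ q ∈ LB, ∃ p ∈ LA, q.1.eval s' = p.1.eval s ∧ q.2.eval s' = p.2.eval s))) := by
  constructor
  · intro H s ⟨hA, hpw⟩
    obtain ⟨s', hext, hB, hsat⟩ := H s (listHeap s LA) hA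
      ((sat_starList_iff s LA _).mpr ⟨hpw, rfl⟩)
    obtain ⟨hpwB, heq⟩ := (sat_starList_iff s' LB _).mp hsat
    refine ⟨s', hext, ⟨hB, hpwB⟩, ?_, ?_⟩
    · intro p hp
      have h1 : listHeap s LA (p.1.eval s) = some (p.2.eval s) := listHeap_mem s hpw hp
      rw [heq] at h1
      obtain ⟨q, hq, e1, e2⟩ := listHeap_some s' h1
      exact ⟨q, hq, e1, e2⟩
    · intro q hq
      have h1 : listHeap s' LB (q.1.eval s') = some (q.2.eval s') := listHeap_mem s' hpwB hq
      rw [← heq] at h1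
      obtain ⟨p, hp, e1, e2⟩ := listHeap_some s h1
      exact ⟨p, hp, e1, e2⟩
  · intro H s h hA hsat
    obtain ⟨hpw, rfl⟩ := (sat_starList_iff s LA h).mp hsat
    obtain ⟨s', hext, ⟨hB, hpwB⟩, hAB, hBA⟩ := H s ⟨hA, hpw⟩
    refine ⟨s', hext, hB, (sat_starList_iff s' LB _).mpr ⟨hpwB, ?_⟩⟩
    funext a
    cases hc : listHeap s LA a with
    | none =>
      symm
      rw [listHeap_none]
      intro q hq he
      obtain ⟨p, hp, e1, _⟩ := hBA q hq
      exact ((listHeap_none s LA a).mp hc) p hp (he.trans e1)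
    | some v =>
      obtain ⟨p, hp, rfl, rfl⟩ := listHeap_some s hc
      obtain ⟨q, hq, e1, e2⟩ := hAB p hp
      rw [e1, e2]
      exact (listHeap_mem s' hpwB hq).symm
end
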